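/- Let (X_1,U_1),...,(X_N,U_N),(X_{N+1},U_{N+1}) be i.i.d. random pairs with values in ℝ^d × ℝ, let u_θ : ℝ^d → ℝ be a fixed measurable predictor, and let σ : ℝ^d → ℝ and g : ℝ^d → ℝ be fixed measurable functions that are strictly positive everywhere. Fix α ∈ (0,1) with k := ⌈(N+1)(1−α)⌉ ≤ N. Define ℓ_j = |U_j − u_θ(X_j)| / ( g(X_j) σ(X_j) ) for j = 1,...,N, let ℓ* be the k-th smallest value among ℓ_1,...,ℓ_N, and let I(x) = [u_θ(x) − ℓ* g(x) σ(x), u_θ(x) + ℓ* g(x) σ(x)]. If the common distribution of the localized score ℓ = |U − u_θ(X)| / ( g(X) σ(X) ) is atomless (continuous), then P( U_{N+1} ∈ I(X_{N+1}) ) = k/(N+1), and this value lies in the interval [1 − α, 1 − α + 1/(N+1)). -/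

import Mathlib

open MeasureTheory ProbabilityTheory

/-- The `k`-th smallest value among `f 0, ..., f (n-1)` (the `k`-th order statistic). -/
noncomputable def kthSmallest {n : ℕ} (k : ℕ) (f : Fin n → ℝ) : ℝ :=
  sInf {t : ℝ | k ≤ (Finset.univ.filter fun i => f i ≤ t).card}

/-!
The scores `|U j - uθ (X j)| / (g (X j) * σ (X j))` are i.i.d. with an atomless law, so almost
surely they are pairwise distinct, and their joint law is invariant under permutations of the
indices. The test point is covered iff its score is at most the `k`-th smallest calibration score,
i.e. iff fewer than `k` of all `N + 1` scores lie strictly below it. By exchangeability the `N + 1`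
events "fewer than `k` scores lie below the `j`-th one" are equally likely, and on distinct samples
exactly `k` of them occur, so each has probability `k / (N + 1)`.
-/

open Finset

section Rank

variable {ι α : Type*} [Fintype ι] [LinearOrder α]

def rank (v : ι → α) (i : ι) : ℕ := #{j | v j < v i}

lemma rank_lt_card (v : ι → α) (i : ι) : rank v i < Fintype.card ι :=
  card_lt_univ_of_notMem (x := i) (by simp)

lemma rank_strictMono (v : ι → α) {i j : ι} (h : v i < v j) : rank v i < rank v j :=
  card_lt_card <| ssubset_iff_of_subset (fun l hl => by
    simp only [mem_filter, mem_univ, true_and] at hl ⊢; exact hl.trans h) |>.2 ⟨i, by simp [h]⟩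

lemma rank_injective {v : ι → α} (hv : Function.Injective v) : Function.Injective (rank v) := by
  intro i j hij
  by_contra hne
  rcases lt_or_gt_of_ne (hv.ne hne) with h | h
  · exact (rank_strictMono v h).ne hij
  · exact (rank_strictMono v h).ne' hij

lemma image_rank {v : ι → α} (hv : Function.Injective v) :
    univ.image (rank v) = range (Fintype.card ι) :=
  eq_of_subset_of_card_le (fun _ hr => by
      obtain ⟨i, -, rfl⟩ := mem_image.1 hr; exact mem_range.2 (rank_lt_card v i))
    (by rw [card_image_of_injective _ (rank_injective hv), card_range, card_univ])

lemma card_rank_lt {v : ι → α} (hv : Function.Injective v) {k : ℕ}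
    (hk : k ≤ Fintype.card ι) : #{i | rank v i < k} = k := by
  rw [← card_image_of_injective _ (rank_injective hv), ← filter_image (p := (· < k)),
    image_rank hv]
  convert card_range k using 2
  ext r
  simp only [mem_filter, mem_range]
  omega

lemma rank_comp_perm (v : ι → α) (e : Equiv.Perm ι) (i : ι) :
    rank (v ∘ e) i = rank v (e i) :=
  card_equiv e (by simp)

lemma rank_last {n : ℕ} (v : Fin (n + 1) → α) :
    rank v (Fin.last n) = #{j : Fin n | v j.castSucc < v (Fin.last n)} := by
  rw [rank, card_filter, card_filter, Fin.sum_univ_castSucc]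
  simp

end Rank

-- Without `1 ≤ k ≤ n` the set defining `kthSmallest` is empty or unbounded below, and `sInf`
-- returns the junk value `0`.
lemma le_kthSmallest_iff {n k : ℕ} (hk₀ : 1 ≤ k) (hkn : k ≤ n) (w : Fin n → ℝ) (a : ℝ) :
    a ≤ kthSmallest k w ↔ #{j | w j < a} < k := by
  obtain ⟨M, hM⟩ := (Set.finite_range w).bddAbove
  obtain ⟨m, hm⟩ := (Set.finite_range w).bddBelow
  have hne : {t : ℝ | k ≤ #{i | w i ≤ t}}.Nonempty :=
    ⟨M, by simpa [filter_true_of_mem fun i _ => hM (Set.mem_range_self i)] using hkn⟩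
  have hbdd : BddBelow {t : ℝ | k ≤ #{i | w i ≤ t}} := by
    refine ⟨m, fun t ht => ?_⟩
    obtain ⟨j, hj⟩ := card_pos.1 (hk₀.trans ht)
    exact (hm (Set.mem_range_self j)).trans (mem_filter.1 hj).2
  rw [kthSmallest, le_csInf_iff hbdd hne]
  constructor
  · intro h
    by_contra! hka
    obtain ⟨j, hj, hmax⟩ := exists_max_image {j | w j < a} w (card_pos.1 (hk₀.trans hka))
    have hk_le : k ≤ #{i | w i ≤ w j} :=
      hka.trans (card_le_card fun l hl => by simpa using hmax l hl)
    exact (h (w j) hk_le).not_gt (mem_filter.1 hj).2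
  · intro h t ht
    by_contra! hta
    have : #{i | w i ≤ t} ≤ #{j | w j < a} :=
      card_le_card fun l hl => by simpa using ((mem_filter.1 hl).2.trans_lt hta)
    have ht : k ≤ #{i | w i ≤ t} := ht
    omega

lemma le_kthSmallest_castSucc_iff {N k : ℕ} (hk₀ : 1 ≤ k) (hkN : k ≤ N) (v : Fin (N + 1) → ℝ) :
    v (Fin.last N) ≤ kthSmallest k (fun j => v j.castSucc) ↔ rank v (Fin.last N) < k := by
  rw [le_kthSmallest_iff hk₀ hkN, rank_last]

lemma ProbabilityTheory.IndepFun.measure_eq_eq_zero {Ω : Type*} [MeasurableSpace Ω]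
    {P : Measure Ω} [IsProbabilityMeasure P] {X Y : Ω → ℝ} (hXY : IndepFun X Y P)
    (hX : Measurable X) (hY : Measurable Y) (hY_atom : ∀ y, P {ω | Y ω = y} = 0) :
    P {ω | X ω = Y ω} = 0 := by
  have hdiag : MeasurableSet {p : ℝ × ℝ | p.1 = p.2} :=
    measurableSet_eq_fun measurable_fst measurable_snd
  have hlaw := (indepFun_iff_map_prod_eq_prod_map_map hX.aemeasurable hY.aemeasurable).1 hXY
  calc P {ω | X ω = Y ω} = (P.map fun ω => (X ω, Y ω)) {p | p.1 = p.2} := by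
        rw [Measure.map_apply (hX.prodMk hY) hdiag]; rfl
    _ = ∫⁻ x, P.map Y {x} ∂(P.map X) := by
        rw [hlaw, Measure.prod_apply hdiag]
        congr 1 with x
        congr 1 with y
        exact eq_comm
    _ = 0 := by simp [Measure.map_apply hY (measurableSet_singleton _), Set.preimage, hY_atom]

section Exchangeable

variable {ι : Type*} [Fintype ι]

lemma measurable_rank (i : ι) : Measurable fun v : ι → ℝ => rank v i := by
  simp only [rank, card_filter]
  exact Finset.measurable_sum _ fun j _ => Measurable.ite
    (measurableSet_lt (measurable_pi_apply j) (measurable_pi_apply i)) measurable_const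
    measurable_const

lemma measurePreserving_comp_perm {α : Type*} [MeasurableSpace α] (μ : Measure α)
    [SigmaFinite μ] (e : Equiv.Perm ι) :
    MeasurePreserving (fun v : ι → α => v ∘ e) (Measure.pi fun _ => μ)
      (Measure.pi fun _ => μ) := by
  convert measurePreserving_piCongrLeft (fun _ : ι => μ) e.symm using 1
  ext v j
  simp [MeasurableEquiv.coe_piCongrLeft, Equiv.piCongrLeft_apply_eq_cast]

lemma measure_rank_lt_of_exchangeable (ν : Measure (ι → ℝ)) [IsProbabilityMeasure ν]
    (hexch : ∀ e : Equiv.Perm ι, MeasurePreserving (fun v => v ∘ e) ν ν)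
    (hinj : ∀ᵐ v ∂ν, Function.Injective v) (i : ι) {k : ℕ} (hk : k ≤ Fintype.card ι) :
    ν {v | rank v i < k} = k / Fintype.card ι := by
  classical
  have hA : ∀ j, MeasurableSet {v : ι → ℝ | rank v j < k} := fun j =>
    measurableSet_lt (measurable_rank j) measurable_const
  have hsame : ∀ j, ν {v | rank v j < k} = ν {v | rank v i < k} := by
    intro j
    have : (fun v : ι → ℝ => v ∘ Equiv.swap i j) ⁻¹' {v | rank v i < k} = {v | rank v j < k} := by
      ext v; simp [rank_comp_perm]
    rw [← this, (hexch _).measure_preimage (hA i).nullMeasurableSet]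
  have hsum : ∑ j, ν {v | rank v j < k} = k := calc
    _ = ∫⁻ v, ∑ j, {v : ι → ℝ | rank v j < k}.indicator 1 v ∂ν := by
      rw [lintegral_finsetSum _ fun j _ => measurable_one.indicator (hA j)]
      simp [lintegral_indicator_one (hA _)]
    _ = ∫⁻ _, (k : ENNReal) ∂ν := lintegral_congr_ae <| hinj.mono fun v hv => by
      simp [Set.indicator_apply, card_rank_lt hv hk]
    _ = k := by simp
  rw [sum_congr rfl fun j _ => hsame j, sum_const, card_univ, nsmul_eq_mul] at hsum
  have : Nonempty ι := ⟨i⟩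
  rw [ENNReal.eq_div_iff (by simp) (by simp), hsum]

lemma ae_injective_pi (μ : Measure ℝ) [IsProbabilityMeasure μ] [NullSingletonClass μ] :
    ∀ᵐ v ∂(Measure.pi fun _ : ι => μ), Function.Injective v := by
  have hcoord : iIndepFun (fun i (v : ι → ℝ) => v i) (Measure.pi fun _ => μ) :=
    iIndepFun_pi (X := fun _ => id) fun _ => aemeasurable_id
  have hne : ∀ i j, i ≠ j → ∀ᵐ v ∂(Measure.pi fun _ : ι => μ), v i ≠ v j := fun i j hij =>
    measure_eq_zero_iff_ae_notMem.1 <| (hcoord.indepFun hij).measure_eq_eq_zero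
      (measurable_pi_apply i) (measurable_pi_apply j) (Measure.pi_hyperplane (fun _ => μ) j)
  simp only [Function.Injective, ae_all_iff]
  intro i j
  by_cases hij : i = j
  · exact Filter.Eventually.of_forall fun _ _ => hij
  · filter_upwards [hne i j hij] with v hv h using absurd h hv

lemma measure_rank_lt_of_iIndepFun {Ω : Type*} [MeasurableSpace Ω] {P : Measure Ω}
    [IsProbabilityMeasure P] {S : ι → Ω → ℝ} (hS : ∀ i, Measurable (S i))
    (hindep : iIndepFun S P) (hid : ∀ i j, IdentDistrib (S i) (S j) P P) (i : ι)
    (hatom : ∀ c, P {ω | S i ω = c} = 0) {k : ℕ} (hk : k ≤ Fintype.card ι) :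
    P {ω | rank (fun j => S j ω) i < k} = k / Fintype.card ι := by
  have : IsProbabilityMeasure (P.map (S i)) :=
    Measure.isProbabilityMeasure_map (hS i).aemeasurable
  have : NullSingletonClass (P.map (S i)) :=
    ⟨fun c => by rw [Measure.map_apply (hS i) (measurableSet_singleton c)]; exact hatom c⟩
  have hlaw : P.map (fun ω j => S j ω) = Measure.pi fun _ => P.map (S i) := by
    rw [(iIndepFun_iff_map_fun_eq_pi_map fun j => (hS j).aemeasurable).1 hindep]
    exact congrArg _ (funext fun j => (hid j i).map_eq)
  have hA : MeasurableSet {v : ι → ℝ | rank v i < k} :=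
    measurableSet_lt (measurable_rank i) measurable_const
  change P ((fun ω j => S j ω) ⁻¹' {v | rank v i < k}) = _
  rw [← Measure.map_apply (measurable_pi_lambda _ hS) hA, hlaw]
  exact measure_rank_lt_of_exchangeable _ (measurePreserving_comp_perm _) (ae_injective_pi _) i hk

end Exchangeable

lemma natCeil_mul_div_mem_Ico {n x : ℝ} (hn : 0 < n) (hx : 0 ≤ x) :
    ⌈n * x⌉₊ / n ∈ Set.Ico x (x + 1 / n) := by
  rw [Set.mem_Ico, le_div_iff₀ hn, div_lt_iff₀ hn, add_mul, one_div_mul_cancel hn.ne', mul_comm x]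
  exact ⟨Nat.le_ceil _, Nat.ceil_lt_add_one (by positivity)⟩

lemma abs_sub_div_mul_le_iff {c u ℓ g σ : ℝ} (hg : 0 < g) (hσ : 0 < σ) :
    |u - c| / (g * σ) ≤ ℓ ↔ c - ℓ * g * σ ≤ u ∧ u ≤ c + ℓ * g * σ := by
  rw [div_le_iff₀ (mul_pos hg hσ), abs_sub_le_iff, mul_assoc]
  constructor <;> rintro ⟨h₁, h₂⟩ <;> constructor <;> linarith

/-- **Exact coverage of local conformal prediction under continuity.**  Under the i.i.d.
assumptions of local conformal prediction, if the common distribution of the localized score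
`|U - uθ X| / (g X * σ X)` is atomless, then the coverage probability equals `k/(N+1)`,
which lies in `[1 - α, 1 - α + 1/(N+1))`. -/
theorem local_cp_exact_coverage
    {Ω : Type*} [MeasurableSpace Ω] (P : Measure Ω) [IsProbabilityMeasure P]
    {d N : ℕ}
    (X : Fin (N + 1) → Ω → (Fin d → ℝ)) (U : Fin (N + 1) → Ω → ℝ)
    (hmeas : ∀ j, Measurable fun ω => (X j ω, U j ω))
    (hindep : iIndepFun (fun j ω => (X j ω, U j ω)) P)
    (hid : ∀ i j, IdentDistrib (fun ω => (X i ω, U i ω)) (fun ω => (X j ω, U j ω)) P P)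
    (uθ : (Fin d → ℝ) → ℝ) (huθ : Measurable uθ)
    (σ : (Fin d → ℝ) → ℝ) (hσmeas : Measurable σ) (hσpos : ∀ x, 0 < σ x)
    (g : (Fin d → ℝ) → ℝ) (hgmeas : Measurable g) (hgpos : ∀ x, 0 < g x)
    (hatomless : ∀ (j : Fin (N + 1)) (c : ℝ),
      P {ω | |U j ω - uθ (X j ω)| / (g (X j ω) * σ (X j ω)) = c} = 0)
    (α : ℝ) (hα : α ∈ Set.Ioo (0 : ℝ) 1)
    (k : ℕ) (hk : k = ⌈((N : ℝ) + 1) * (1 - α)⌉₊) (hkN : k ≤ N)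
    (ℓstar : Ω → ℝ)
    (hℓstar : ∀ ω, ℓstar ω =
      kthSmallest k
        (fun j : Fin N =>
          |U j.castSucc ω - uθ (X j.castSucc ω)| /
            (g (X j.castSucc ω) * σ (X j.castSucc ω)))) :
    P {ω |
        uθ (X (Fin.last N) ω) - ℓstar ω * g (X (Fin.last N) ω) * σ (X (Fin.last N) ω) ≤
            U (Fin.last N) ω ∧
        U (Fin.last N) ω ≤
          uθ (X (Fin.last N) ω) + ℓstar ω * g (X (Fin.last N) ω) * σ (X (Fin.last N) ω)} =
        ENNReal.ofReal ((k : ℝ) / (N + 1)) ∧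
      1 - α ≤ (k : ℝ) / (N + 1) ∧ (k : ℝ) / (N + 1) < 1 - α + 1 / (N + 1 : ℝ) := by
  have hN : (0 : ℝ) < N + 1 := by positivity
  have hα₁ : 0 < 1 - α := sub_pos.2 hα.2
  have hk₀ : 1 ≤ k := hk ▸ Nat.one_le_ceil_iff.2 (mul_pos hN hα₁)
  let score : (Fin d → ℝ) × ℝ → ℝ := fun p => |p.2 - uθ p.1| / (g p.1 * σ p.1)
  have hscore : Measurable score := by fun_prop
  let S : Fin (N + 1) → Ω → ℝ := fun j ω => score (X j ω, U j ω)
  refine ⟨?_, hk ▸ natCeil_mul_div_mem_Ico hN hα₁.le⟩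
  calc _ = P {ω | rank (fun j => S j ω) (Fin.last N) < k} := by
        congr with ω
        rw [← abs_sub_div_mul_le_iff (hgpos _) (hσpos _), hℓstar ω]
        exact le_kthSmallest_castSucc_iff hk₀ hkN (fun j => S j ω)
    _ = k / Fintype.card (Fin (N + 1)) :=
        measure_rank_lt_of_iIndepFun (fun j => hscore.comp (hmeas j))
          (hindep.comp _ fun _ => hscore) (fun i j => (hid i j).comp hscore) _ (hatomless _)
          (by rw [Fintype.card_fin]; omega)
    _ = ENNReal.ofReal (k / (N + 1)) := by
        rw [Fintype.card_fin, ENNReal.ofReal_div_of_pos hN]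
        norm_cast
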